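/- Let m ≥ 3 be an odd integer, n = m+1, and q ≥ 2 an integer. Let Λ_m = {x ∈ ℤ^m : x₁ + ⋯ + x_m = 0} and Λ_n = {y ∈ ℤ^n : y₁ + ⋯ + yₙ = 0}. Define F_m : ℤ^m → ℤ^m by F_m(x) = −q·(x_m, x₁, …, x_{m−1}) and F_n : ℤ^n → ℤ^n by F_n(y) = −q·(y_m, y₁, …, y_{m−1}, yₙ). Then for every x ∈ Λ_m: if the vector (x₁, …, x_m, 0) ∈ ℤ^n lies in the set {F_n(y) − y : y ∈ Λ_n}, then x lies in the set {F_m(z) − z : z ∈ Λ_m}. In other words, the inclusion (x₁,…,x_m) ↦ (x₁,…,x_m,0) induces an injective map Λ_m/(F_m − 1)Λ_m → Λ_n/(F_n − 1)Λ_n. -/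
import Mathlib


/-- The cyclic shift `w(x₁, …, xₙ) = (xₙ, x₁, …, x_{n−1})` on `ℤ^n`. -/
def cycShift (n : ℕ) [NeZero n] (x : Fin n → ℤ) : Fin n → ℤ :=
  fun i => x (i - 1)

/-- The map `(y₁, …, yₙ) ↦ (y_{n−1}, y₁, …, y_{n−2}, yₙ)` on `ℤ^n`: the
`(n−1)`-cycle `(1 2 … n−1)` acting on the first `n−1` coordinates and fixing
the last one. -/
def pShift (n : ℕ) (y : Fin n → ℤ) : Fin n → ℤ := fun i =>
  if (i : ℕ) = n - 1 then y i
  else if (i : ℕ) = 0 then y ⟨n - 2, by have := i.isLt; omega⟩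
  else y ⟨(i : ℕ) - 1, by have := i.isLt; omega⟩

/-- Let `m ≥ 3` be odd, `n = m + 1`, `q ≥ 2`, and let `Λ_m ⊆ ℤ^m`, `Λ_n ⊆ ℤ^n`
be the sum-zero lattices.  With `F_m(x) = −q·(x_m, x₁, …, x_{m−1})` and
`F_n(y) = −q·(y_m, y₁, …, y_{m−1}, yₙ)`, if `x ∈ Λ_m` is such that
`(x₁, …, x_m, 0)` lies in `{F_n(y) − y : y ∈ Λ_n}`, then `x` lies in
`{F_m(z) − z : z ∈ Λ_m}`: the inclusion induces an injection
`Λ_m/(F_m−1)Λ_m → Λ_n/(F_n−1)Λ_n`. -/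
theorem stmt_13 (m : ℕ) [NeZero m] (hm : 3 ≤ m) (hodd : Odd m)
    (q : ℤ) (hq : 2 ≤ q)
    (x : Fin m → ℤ) (hx : (∑ i, x i) = 0)
    (h : ∃ y : Fin (m + 1) → ℤ, (∑ i, y i) = 0 ∧
      (fun i => -q * pShift (m + 1) y i - y i) = Fin.snoc x 0) :
    ∃ z : Fin m → ℤ, (∑ i, z i) = 0 ∧
      (fun i => -q * cycShift m z i - z i) = x := by
  obtain ⟨y, hsum, heq⟩ := h
  have hlast : y (Fin.last m) = 0 := by
    have h1 := congrFun heq (Fin.last m)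
    simp only [pShift, Fin.val_last, Nat.add_sub_cancel, if_pos rfl, if_true, Fin.snoc_last] at h1
    have h2 : (-q - 1) * y (Fin.last m) = 0 := by linear_combination h1
    have hq1 : (-q - 1) ≠ 0 := by omega
    exact (mul_eq_zero.mp h2).resolve_left hq1
  refine ⟨fun i => y i.castSucc, ?_, ?_⟩
  · rw [Fin.sum_univ_castSucc, hlast, add_zero] at hsum
    exact hsum
  · funext i
    have h1 := congrFun heq i.castSucc
    rw [Fin.snoc_castSucc] at h1
    have him : (i : ℕ) < m := i.isLt
    have h1m : ((1 : Fin m) : ℕ) = 1 := by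
      rw [Fin.val_one']; exact Nat.mod_eq_of_lt (by omega)
    have hsub : ((i - 1 : Fin m) : ℕ) = (m - 1 + (i : ℕ)) % m := by
      rw [Fin.sub_def, h1m]
    have key : pShift (m + 1) y i.castSucc = y ((i - 1).castSucc) := by
      simp only [pShift, Fin.coe_castSucc, Nat.add_sub_cancel]
      rw [if_neg (by omega)]
      by_cases hi0 : (i : ℕ) = 0
      · rw [if_pos hi0]
        congr 1
        ext
        simp only [Fin.coe_castSucc, hsub, hi0, Nat.add_zero,
          Nat.mod_eq_of_lt (show m - 1 < m by omega)]
        omega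
      · rw [if_neg hi0]
        congr 1
        ext
        have h2 : m - 1 + (i : ℕ) = ((i : ℕ) - 1) + m := by omega
        simp only [Fin.coe_castSucc, hsub, h2, Nat.add_mod_right,
          Nat.mod_eq_of_lt (show (i : ℕ) - 1 < m by omega)]
    rw [key] at h1
    simpa [cycShift] using h1
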